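/- For every integer n ≥ 2 there exists a play of the ordered Zeckendorf game on n of length at least ⌊n²/4⌋ that ends at the state consisting entirely of 2's when n is even, and at the state consisting of a single 1 followed by (n−1)/2 copies of 2 when n is odd. In particular M(n) ≥ ⌊n²/4⌋. -/

import Mathlib

/-- Fibonacci numbers indexed so that `F 1 = 1`, `F 2 = 2`,
and `F (i+1) = F i + F (i-1)`. -/
def F (i : ℕ) : ℕ := Nat.fib (i + 1)

/-- A single legal move of the ordered Zeckendorf game, acting on an
adjacent pair of entries of the list of indices. -/
inductive Move : List ℕ → List ℕ → Prop
  | merge (a b : List ℕ) (i : ℕ) (hi : 1 ≤ i) :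
      Move (a ++ [i, i + 1] ++ b) (a ++ [i + 2] ++ b)
  | mergeOnes (a b : List ℕ) :
      Move (a ++ [1, 1] ++ b) (a ++ [2] ++ b)
  | split (a b : List ℕ) (i : ℕ) (hi : 2 < i) :
      Move (a ++ [i, i] ++ b) (a ++ [i - 2, i + 1] ++ b)
  | splitTwos (a b : List ℕ) :
      Move (a ++ [2, 2] ++ b) (a ++ [1, 3] ++ b)
  | switch (a b : List ℕ) (i j : ℕ) (hj : 1 ≤ j) (hij : j < i) :
      Move (a ++ [i, j] ++ b) (a ++ [j, i] ++ b)

/-- A play of the ordered Zeckendorf game on `n` with `m` moves: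
the initial state is `n` copies of `1`, and each step is a legal move. -/
def IsPlay (n : ℕ) (s : ℕ → List ℕ) (m : ℕ) : Prop :=
  s 0 = List.replicate n 1 ∧ ∀ t < m, Move (s t) (s (t + 1))

/-- A state is terminal if no legal move applies to it. -/
def Terminal (S : List ℕ) : Prop := ∀ T, ¬ Move S T

/-- The total Fibonacci value of a state. -/
def val (S : List ℕ) : ℕ := (S.map F).sum

/-- The monovariant `f(S) = Σ_{j=1}^k (k+1−j)·F_{i_j}` (here with
`j` running over 0-based positions, so the weight of position `j` is
`k − j`). -/
def f (S : List ℕ) : ℕ := ∑ j : Fin S.length, (S.length - (j : ℕ)) * F (S.get j)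

/-- `M n` is the maximal number of moves in a completed play of the
ordered Zeckendorf game on `n`. -/
noncomputable def M (n : ℕ) : ℕ :=
  sSup {m | ∃ s : ℕ → List ℕ, IsPlay n s m ∧ Terminal (s m)}

/-- The golden ratio `φ = (1+√5)/2`. -/
noncomputable def phi : ℝ := (1 + Real.sqrt 5) / 2

/-- Logarithm to base `φ`. -/
noncomputable def logphi (x : ℝ) : ℝ := Real.log x / Real.log phi

/-! Merging the two leading `1`s and switching the resulting `2` to the right past the remaining
`j` ones costs `j + 1` moves. Repeating this on `2t + r` ones (`r ≤ 1`) leaves `r` ones followed by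
`t` twos after `t² + r t ≥ ⌊(2t + r)²/4⌋` moves. Every move decreases the monovariant `f`, so the
play can be completed, and completed plays on `n` have at most `f (1, …, 1)` moves, which bounds
the set whose supremum is `M n`. -/

lemma F_pos (i : ℕ) : 0 < F i := Nat.fib_pos.2 i.succ_pos

lemma F_add_two (i : ℕ) : F (i + 2) = F i + F (i + 1) := Nat.fib_add_two

lemma F_lt_F {i j : ℕ} (hj : 1 ≤ j) (hji : j < i) : F j < F i := by
  obtain ⟨j, rfl⟩ : ∃ k, j = k + 1 := ⟨j - 1, by omega⟩
  obtain ⟨i, rfl⟩ : ∃ k, i = k + 1 := ⟨i - 1, by omega⟩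
  exact Nat.fib_add_two_strictMono (by omega : j < i)

lemma val_nil : val [] = 0 := rfl

lemma val_cons (x : ℕ) (l : List ℕ) : val (x :: l) = F x + val l := by simp [val]

lemma val_append (a c : List ℕ) : val (a ++ c) = val a + val c := by simp [val]

lemma f_nil : f [] = 0 := rfl

lemma f_cons (x : ℕ) (l : List ℕ) : f (x :: l) = (l.length + 1) * F x + f l := by
  simp [f, Fin.sum_univ_succ]

lemma f_append (a c : List ℕ) : f (a ++ c) = f a + val a * c.length + f c := by
  induction a with
  | nil => simp [f_nil, val_nil]
  | cons x a ih => simp only [List.cons_append, f_cons, ih, val_cons, List.length_append]; ring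

lemma f_lt_of_replace {p q : List ℕ} (hval : val q = val p) (hlen : q.length ≤ p.length)
    (hf : f q < f p) (a b : List ℕ) : f (a ++ q ++ b) < f (a ++ p ++ b) := by
  simp only [f_append, val_append, hval]
  have := Nat.mul_le_mul_left (val a) hlen
  omega

lemma f_lt_of_move {S T : List ℕ} (h : Move S T) : f T < f S := by
  cases h with
  | merge a b i _ =>
    have := F_add_two i
    have := F_pos i
    apply f_lt_of_replace <;> simp [val_cons, val_nil, f_cons, f_nil] <;> omega
  | mergeOnes a b =>
    apply f_lt_of_replace <;> decide
  | split a b i hi =>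
    obtain ⟨j, rfl⟩ : ∃ j, i = j + 3 := ⟨i - 3, by omega⟩
    have : F (j + 3) = F (j + 1) + F (j + 2) := F_add_two _
    have : F (j + 4) = F (j + 2) + F (j + 3) := F_add_two _
    have := F_pos (j + 2)
    apply f_lt_of_replace <;> simp [val_cons, val_nil, f_cons, f_nil, add_assoc] <;> omega
  | splitTwos a b =>
    apply f_lt_of_replace <;> decide
  | switch a b i j hj hji =>
    have := F_lt_F hj hji
    apply f_lt_of_replace <;> simp [val_cons, val_nil, f_cons, f_nil] <;> omega

/-- The game leads from `S` to `T` in exactly `m` moves. -/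
inductive Reaches : List ℕ → List ℕ → ℕ → Prop
  | refl (S : List ℕ) : Reaches S S 0
  | head {S T U : List ℕ} {m : ℕ} : Move S T → Reaches T U m → Reaches S U (m + 1)

namespace Reaches

lemma trans {S T U : List ℕ} {m k : ℕ} (h₁ : Reaches S T m) (h₂ : Reaches T U k) :
    Reaches S U (m + k) := by
  induction h₁ with
  | refl => simpa using h₂
  | head hmove _ ih => exact Nat.add_right_comm _ _ _ ▸ head hmove (ih h₂)

lemma exists_seq {S T : List ℕ} {m : ℕ} (h : Reaches S T m) :
    ∃ s : ℕ → List ℕ, s 0 = S ∧ s m = T ∧ ∀ t < m, Move (s t) (s (t + 1)) := by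
  induction h with
  | refl S => exact ⟨fun _ => S, rfl, rfl, by omega⟩
  | @head S _ _ _ hmove _ ih =>
    obtain ⟨s, hs0, hsm, hstep⟩ := ih
    refine ⟨fun | 0 => S | t + 1 => s t, rfl, hsm, ?_⟩
    rintro (_ | t) ht
    · simpa [hs0] using hmove
    · exact hstep t (by omega)

end Reaches

lemma exists_reaches_terminal (S : List ℕ) : ∃ m T, Reaches S T m ∧ Terminal T := by
  by_cases hS : Terminal S
  · exact ⟨0, S, .refl S, hS⟩
  · obtain ⟨T, hST⟩ : ∃ T, Move S T := by simpa [Terminal] using hS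
    have := f_lt_of_move hST
    obtain ⟨m, U, hTU, hU⟩ := exists_reaches_terminal T
    exact ⟨m + 1, U, .head hST hTU, hU⟩
termination_by f S

lemma IsPlay.le_f {n m : ℕ} {s : ℕ → List ℕ} (h : IsPlay n s m) : m ≤ f (s 0) := by
  have key : ∀ t ≤ m, t + f (s t) ≤ f (s 0) := by
    intro t
    induction t with
    | zero => simp
    | succ t ih =>
      intro ht
      have := ih (by omega)
      have := f_lt_of_move (h.2 t (by omega))
      omega
  have := key m le_rfl
  omega

lemma bddAbove_completed_plays (n : ℕ) :
    BddAbove {m | ∃ s : ℕ → List ℕ, IsPlay n s m ∧ Terminal (s m)} :=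
  ⟨f (List.replicate n 1), fun _ ⟨_, hplay, _⟩ => hplay.1 ▸ hplay.le_f⟩

lemma reaches_switch_past_ones {x : ℕ} (hx : 1 < x) (j : ℕ) (a c : List ℕ) :
    Reaches (a ++ x :: (List.replicate j 1 ++ c)) (a ++ List.replicate j 1 ++ x :: c) j := by
  induction j generalizing a with
  | zero => simpa using Reaches.refl _
  | succ j ih =>
    have hmove : Move (a ++ [x, 1] ++ (List.replicate j 1 ++ c))
        (a ++ [1, x] ++ (List.replicate j 1 ++ c)) := .switch a _ x 1 le_rfl hx
    have hrest : Reaches (a ++ [1, x] ++ (List.replicate j 1 ++ c))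
        (a ++ List.replicate (j + 1) 1 ++ x :: c) j := by
      have := ih (a ++ [1])
      simpa only [List.replicate_succ, List.append_assoc, List.cons_append, List.nil_append]
        using this
    simpa [List.replicate_succ] using Reaches.head hmove hrest

lemma reaches_merge_and_switch (j : ℕ) (c : List ℕ) :
    Reaches (List.replicate (j + 2) 1 ++ c) (List.replicate j 1 ++ 2 :: c) (j + 1) := by
  have hmove : Move ([] ++ [1, 1] ++ (List.replicate j 1 ++ c))
      ([] ++ [2] ++ (List.replicate j 1 ++ c)) := .mergeOnes [] _
  simpa [List.replicate_succ] using
    Reaches.head hmove (by simpa using reaches_switch_past_ones one_lt_two j [] c)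

lemma reaches_ones_twos (r t : ℕ) (c : List ℕ) :
    Reaches (List.replicate (2 * t + r) 1 ++ c) (List.replicate r 1 ++ List.replicate t 2 ++ c)
      (t ^ 2 + r * t) := by
  induction t generalizing c with
  | zero => simpa using Reaches.refl _
  | succ t ih =>
    have hround := reaches_merge_and_switch (2 * t + r) c
    have := hround.trans (ih (2 :: c))
    rw [show 2 * t + r + 2 = 2 * (t + 1) + r by ring,
      show 2 * t + r + 1 + (t ^ 2 + r * t) = (t + 1) ^ 2 + r * (t + 1) by ring] at this
    simpa [List.replicate_succ'] using this

lemma exists_reaches_staircase (n : ℕ) :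
    ∃ m, n ^ 2 / 4 ≤ m ∧ Reaches (List.replicate n 1)
      (if Even n then List.replicate (n / 2) 2 else 1 :: List.replicate ((n - 1) / 2) 2) m := by
  rcases Nat.even_or_odd' n with ⟨t, rfl | rfl⟩
  · refine ⟨t ^ 2, by rw [show (2 * t) ^ 2 = 4 * t ^ 2 by ring]; omega, ?_⟩
    simpa using reaches_ones_twos 0 t []
  · refine ⟨t ^ 2 + t, by rw [show (2 * t + 1) ^ 2 = 4 * (t ^ 2 + t) + 1 by ring]; omega, ?_⟩
    simpa [Nat.even_add_one] using reaches_ones_twos 1 t []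

theorem stmt_14_general (n : ℕ) :
    (∃ (s : ℕ → List ℕ) (m : ℕ), IsPlay n s m ∧ n ^ 2 / 4 ≤ m ∧
      s m = if Even n then List.replicate (n / 2) 2
            else 1 :: List.replicate ((n - 1) / 2) 2) ∧
    n ^ 2 / 4 ≤ M n := by
  obtain ⟨m, hm, hreach⟩ := exists_reaches_staircase n
  obtain ⟨s, hs0, hsm, hstep⟩ := hreach.exists_seq
  refine ⟨⟨s, m, ⟨hs0, hstep⟩, hm, hsm⟩, ?_⟩
  obtain ⟨k, T, hT, hterm⟩ := exists_reaches_terminal _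
  obtain ⟨s', hs'0, hs'T, hstep'⟩ := (hreach.trans hT).exists_seq
  have hcompleted : m + k ≤ M n :=
    le_csSup (bddAbove_completed_plays n) ⟨s', ⟨hs'0, hstep'⟩, hs'T ▸ hterm⟩
  omega

theorem stmt_14 (n : ℕ) (hn : 2 ≤ n) :
    (∃ (s : ℕ → List ℕ) (m : ℕ), IsPlay n s m ∧ n ^ 2 / 4 ≤ m ∧
      s m = if Even n then List.replicate (n / 2) 2
            else 1 :: List.replicate ((n - 1) / 2) 2) ∧
    n ^ 2 / 4 ≤ M n :=
  stmt_14_general n
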